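/- arXiv:1604.06304 — 4 statements merged into one kernel-verified Lean document; each statement's English description precedes it below -/
import Mathlib

section
/- Let g, h be probability densities on △ with ‖log(g/h)‖_∞ < ∞. Then for any constant κ ∈ ℝ, KL(g‖h) ≤ (1/2) exp(‖log(g/h) - κ‖_∞) ∫_△ g (log(g/h) - κ)^2. -/
open MeasureTheory Real

def simplexD (d : ℕ) : Set (Fin d → ℝ) :=
  {x | (∀ i, x i ∈ Set.Icc (0:ℝ) 1) ∧ ∀ i j : Fin d, i ≤ j → x i ≤ x j}

noncomputable def qMeas (d i : ℕ) : Measure ℝ :=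
  volume.withDensity (fun t => ENNReal.ofReal
    (Set.indicator (Set.Icc (0:ℝ) 1)
      (fun s => (1-s)^(d-i) * s^(i-1) / ((d-i).factorial * (i-1).factorial)) t))

/-! Put `u = log (g / h) - κ`, so that `|u| ≤ M`. Since `g e^{-u} = e^κ h`, integrating gives
`∫ g e^{-u} = e^κ ≥ 1 + κ`. Taylor's theorem gives `e^{-u} ≤ 1 - u + (e^M / 2) u²`, hence
`1 + κ ≤ 1 - ∫ g u + (e^M / 2) ∫ g u²`, and `KL(g‖h) = ∫ g u + κ`. -/

open Set

theorem Real.exp_le_one_add_add_exp_mul_sq {t M : ℝ} (ht : |t| ≤ M) :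
    exp t ≤ 1 + t + exp M / 2 * t ^ 2 := by
  rcases eq_or_ne 0 t with rfl | ht0
  · simp
  obtain ⟨ξ, hξ, hT⟩ := taylor_mean_remainder_lagrange_iteratedDeriv (n := 1) ht0
    contDiff_exp.contDiffOn
  have hexp' : derivWithin exp (uIcc 0 t) 0 = 1 := by
    rw [(hasDerivAt_exp 0).hasDerivWithinAt.derivWithin
      (uniqueDiffOn_uIcc ht0 _ left_mem_uIcc), exp_zero]
  have hexp'' : iteratedDeriv 2 exp = exp := by
    rw [iteratedDeriv_eq_iterate, iter_deriv_exp]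
  norm_num [taylorWithinEval_succ, hexp', hexp''] at hT
  have hξM : exp ξ ≤ exp M :=
    exp_le_exp.2 <| hξ.2.le.trans <| (max_le (abs_nonneg t) (le_abs_self t)).trans ht
  nlinarith [sq_nonneg t]

theorem integral_mul_log_div_le_exp_mul_integral_sq {α : Type*} [MeasurableSpace α]
    {μ : Measure α} {g h : α → ℝ} (hgm : AEMeasurable g μ)
    (hhm : AEMeasurable h μ) (hgpos : ∀ᵐ x ∂μ, 0 < g x) (hhpos : ∀ᵐ x ∂μ, 0 < h x)
    (hg1 : ∫ x, g x ∂μ = 1) (hh1 : ∫ x, h x ∂μ = 1) {κ M : ℝ}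
    (hM : ∀ᵐ x ∂μ, |log (g x / h x) - κ| ≤ M) :
    ∫ x, g x * log (g x / h x) ∂μ
      ≤ 1 / 2 * exp M * ∫ x, g x * (log (g x / h x) - κ) ^ 2 ∂μ := by
  set u := fun x => log (g x / h x) - κ
  have hg : Integrable g μ := .of_integral_ne_zero (by simp [hg1])
  have hh : Integrable h μ := .of_integral_ne_zero (by simp [hh1])
  have hu : AEStronglyMeasurable u μ := (((hgm.div hhm).log).sub_const κ).aestronglyMeasurable
  have hgu : Integrable (fun x => g x * u x) μ :=
    hg.mul_bdd hu (hM.mono fun x hx => by rwa [Real.norm_eq_abs])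
  have hgu2 : Integrable (fun x => g x * u x ^ 2) μ :=
    hg.mul_bdd (hu.pow 2) (hM.mono fun x hx => by
      rw [norm_pow, Real.norm_eq_abs]; exact pow_le_pow_left₀ (abs_nonneg _) hx 2)
  have hgexp : (fun x => g x * exp (-u x)) =ᵐ[μ] fun x => exp κ * h x := by
    filter_upwards [hgpos, hhpos] with x hgx hhx
    simp only [u, neg_sub, exp_sub, exp_log (div_pos hgx hhx)]
    field_simp
  have hlin : Integrable (fun x => g x - g x * u x) μ := hg.sub hgu
  have htaylor : exp κ ≤ ∫ x, (g x - g x * u x + exp M / 2 * (g x * u x ^ 2)) ∂μ := by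
    rw [← mul_one (exp κ), ← hh1, ← integral_const_mul, ← integral_congr_ae hgexp]
    refine integral_mono_ae ((hh.const_mul _).congr hgexp.symm)
      (hlin.add (hgu2.const_mul _)) ?_
    filter_upwards [hgpos, hM] with x hgx hx
    have := mul_le_mul_of_nonneg_left
      (exp_le_one_add_add_exp_mul_sq (t := -u x) (M := M) (by rwa [abs_neg])) hgx.le
    linarith
  rw [integral_add hlin (hgu2.const_mul _), integral_sub hg hgu, integral_const_mul,
    hg1] at htaylor
  have hKL : ∫ x, g x * log (g x / h x) ∂μ = ∫ x, g x * u x ∂μ + κ := by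
    rw [← mul_one κ, ← hg1, ← integral_const_mul, ← integral_add hgu (hg.const_mul κ)]
    exact integral_congr_ae (.of_forall fun x => by simp only [u]; ring)
  linarith [add_one_le_exp κ]

theorem isClosed_simplexD (d : ℕ) : IsClosed (simplexD d) := by
  simp only [simplexD, ofPred_and, ofPred_forall]
  exact (isClosed_iInter fun i => isClosed_Icc.preimage (continuous_apply i)).inter
    (isClosed_iInter fun i => isClosed_iInter fun j => isClosed_iInter fun _ =>
      isClosed_le (continuous_apply i) (continuous_apply j))

theorem statement2_general (d : ℕ) (g h : (Fin d → ℝ) → ℝ)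
    (hgm : Measurable g) (hhm : Measurable h)
    (hgpos : ∀ x ∈ simplexD d, 0 < g x) (hhpos : ∀ x ∈ simplexD d, 0 < h x)
    (hg1 : ∫ x in simplexD d, g x = 1) (hh1 : ∫ x in simplexD d, h x = 1)
    (κ M : ℝ) (hM : ∀ x ∈ simplexD d, |Real.log (g x / h x) - κ| ≤ M) :
    ∫ x in simplexD d, g x * Real.log (g x / h x)
      ≤ (1/2) * Real.exp M * ∫ x in simplexD d, g x * (Real.log (g x / h x) - κ)^2 := by
  have hS := (isClosed_simplexD d).measurableSet
  exact integral_mul_log_div_le_exp_mul_integral_sq hgm.aemeasurable hhm.aemeasurable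
    (ae_restrict_of_forall_mem hS hgpos) (ae_restrict_of_forall_mem hS hhpos) hg1 hh1
    (ae_restrict_of_forall_mem hS hM)

/-- Lemma: upper bound on Kullback-Leibler divergence. -/
theorem statement2 (d : ℕ) (hd : 2 ≤ d) (g h : (Fin d → ℝ) → ℝ)
    (hgm : Measurable g) (hhm : Measurable h)
    (hgpos : ∀ x ∈ simplexD d, 0 < g x) (hhpos : ∀ x ∈ simplexD d, 0 < h x)
    (hg1 : ∫ x in simplexD d, g x = 1) (hh1 : ∫ x in simplexD d, h x = 1)
    (B : ℝ) (hB : ∀ x ∈ simplexD d, |Real.log (g x / h x)| ≤ B)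
    (κ M : ℝ) (hM : ∀ x ∈ simplexD d, |Real.log (g x / h x) - κ| ≤ M) :
    ∫ x in simplexD d, g x * Real.log (g x / h x)
      ≤ (1/2) * Real.exp M * ∫ x in simplexD d, g x * (Real.log (g x / h x) - κ)^2 :=
  statement2_general d g h hgm hhm hgpos hhpos hg1 hh1 κ M hM
end

section
/- Let g, h be probability densities on △ with ‖log(g/h)‖_∞ < ∞. Then for any κ ∈ ℝ, ∫_△ (g-h)^2/g ≤ exp(2(‖log(g/h) - κ‖_∞ - κ)) ∫_△ g (log(g/h) - κ)^2. -/
/-!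
With `λ = exp (-κ)` and `u = log (g / h) - κ` we have `h = λ g exp (-u)`. Since `g` and `h` both
have mass one, `∫ (λ g - h)² / g = ∫ (g - h)² / g + (λ - 1)²`, so the χ²-distance is at most
`∫ (λ g - h)² / g = λ² ∫ g (1 - exp (-u))²`, and `|1 - exp (-u)| ≤ |u| exp |u| ≤ |u| exp M`.
-/

open MeasureTheory Real

lemma Real.abs_exp_sub_one_le_mul_exp (x : ℝ) : |exp x - 1| ≤ |x| * exp |x| := by
  rcases le_or_gt 0 x with hx | hx
  · have h₁ : 1 - x ≤ exp (-x) := by linarith [add_one_le_exp (-x)]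
    have h₂ : exp (-x) * exp x = 1 := by rw [← exp_add, neg_add_cancel, exp_zero]
    rw [abs_of_nonneg (by linarith [one_le_exp hx]), abs_of_nonneg hx]
    nlinarith [exp_pos x]
  · have h₁ : 1 ≤ exp (-x) := one_le_exp (by linarith)
    rw [abs_of_nonpos (by linarith [exp_lt_one_iff.2 hx]), abs_of_neg hx]
    nlinarith [add_one_le_exp x]

lemma Real.sq_one_sub_exp_neg_le {u M : ℝ} (hu : |u| ≤ M) :
    (1 - exp (-u)) ^ 2 ≤ u ^ 2 * exp (2 * M) := by
  calc (1 - exp (-u)) ^ 2 = |exp (-u) - 1| ^ 2 := by rw [sq_abs]; ring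
    _ ≤ (|u| * exp |u|) ^ 2 := by
        gcongr; simpa only [abs_neg] using abs_exp_sub_one_le_mul_exp (-u)
    _ = u ^ 2 * exp (2 * |u|) := by rw [mul_pow, sq_abs, ← exp_nat_mul]; norm_num
    _ ≤ u ^ 2 * exp (2 * M) := by gcongr

lemma le_exp_mul_of_abs_log_div_sub_le {a b κ M : ℝ} (ha : 0 < a) (hb : 0 < b)
    (hM : |log (a / b) - κ| ≤ M) : b ≤ exp (M - κ) * a := by
  have hlog : log (b / a) ≤ M - κ := by
    rw [← neg_neg (log (b / a)), ← log_inv, inv_div]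
    linarith [neg_abs_le (log (a / b) - κ)]
  rw [← div_le_iff₀ ha]
  exact (log_le_iff_le_exp (div_pos hb ha)).1 hlog

lemma sq_exp_neg_mul_sub_div_le {a b κ M : ℝ} (ha : 0 < a) (hb : 0 < b)
    (hM : |log (a / b) - κ| ≤ M) :
    (exp (-κ) * a - b) ^ 2 / a ≤ exp (2 * (M - κ)) * (a * (log (a / b) - κ) ^ 2) := by
  set u := log (a / b) - κ
  have hb_eq : b = exp (-κ) * a * exp (-u) := by
    calc b = a * exp (-log (a / b)) := by
          rw [exp_neg, exp_log (div_pos ha hb)]; field_simp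
      _ = exp (-κ) * a * exp (-u) := by
          rw [show -log (a / b) = -κ + -u by ring, exp_add]; ring
  calc (exp (-κ) * a - b) ^ 2 / a = exp (-κ) ^ 2 * (a * (1 - exp (-u)) ^ 2) := by
        rw [hb_eq]; field_simp
    _ ≤ exp (-κ) ^ 2 * (a * (u ^ 2 * exp (2 * M))) := by
        gcongr; exact sq_one_sub_exp_neg_le hM
    _ = exp (2 * (M - κ)) * (a * u ^ 2) := by
        rw [← exp_nat_mul, show 2 * (M - κ) = (2 : ℕ) * -κ + 2 * M by push_cast; ring, exp_add]
        ring

section ChiSquare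

variable {α : Type*} [MeasurableSpace α] {μ : Measure α} {g h : α → ℝ}

lemma integrable_sq_sub_div_of_le_mul {K : ℝ} (hg : Integrable g μ)
    (hh : AEStronglyMeasurable h μ) (hbound : ∀ᵐ x ∂μ, 0 < g x ∧ 0 ≤ h x ∧ h x ≤ K * g x) :
    Integrable (fun x => (g x - h x) ^ 2 / g x) μ := by
  have hmeas : AEMeasurable (fun x => (g x - h x) ^ 2 / g x) μ :=
    ((hg.1.aemeasurable.sub hh.aemeasurable).pow_const 2).div hg.1.aemeasurable
  refine (hg.const_mul (1 + K ^ 2)).mono' hmeas.aestronglyMeasurable ?_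
  filter_upwards [hbound] with x ⟨hgx, hhx, hhK⟩
  rw [norm_of_nonneg (by positivity), div_le_iff₀ hgx]
  nlinarith

lemma integral_sq_mul_sub_div_eq (hg : Integrable g μ) (hh : Integrable h μ)
    (hg1 : ∫ x, g x ∂μ = 1) (hh1 : ∫ x, h x ∂μ = 1) (hg0 : ∀ᵐ x ∂μ, g x ≠ 0)
    (hchi : Integrable (fun x => (g x - h x) ^ 2 / g x) μ) (c : ℝ) :
    ∫ x, (c * g x - h x) ^ 2 / g x ∂μ = ∫ x, (g x - h x) ^ 2 / g x ∂μ + (c - 1) ^ 2 := by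
  have hexpand : (fun x => (c * g x - h x) ^ 2 / g x) =ᵐ[μ]
      fun x => (g x - h x) ^ 2 / g x + 2 * (c - 1) * (g x - h x) + (c - 1) ^ 2 * g x := by
    filter_upwards [hg0] with x hx
    field_simp
    ring
  have hlin : Integrable (fun x => 2 * (c - 1) * (g x - h x)) μ := (hg.sub hh).const_mul _
  rw [integral_congr_ae hexpand, integral_add ?_ (hg.const_mul _), integral_add hchi hlin,
    integral_const_mul, integral_const_mul, integral_sub hg hh, hg1, hh1]
  · ring
  · exact hchi.add hlin

end ChiSquare

lemma measurableSet_simplexD (d : ℕ) : MeasurableSet (simplexD d) := by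
  simp only [simplexD, Set.ofPred_and, Set.ofPred_forall]
  measurability

theorem statement3_general (d : ℕ) (g h : (Fin d → ℝ) → ℝ)
    (hgpos : ∀ x ∈ simplexD d, 0 < g x) (hhpos : ∀ x ∈ simplexD d, 0 < h x)
    (hg1 : ∫ x in simplexD d, g x = 1) (hh1 : ∫ x in simplexD d, h x = 1)
    (κ M : ℝ) (hM : ∀ x ∈ simplexD d, |Real.log (g x / h x) - κ| ≤ M) :
    ∫ x in simplexD d, (g x - h x)^2 / g x
      ≤ Real.exp (2*(M - κ)) * ∫ x in simplexD d, g x * (Real.log (g x / h x) - κ)^2 := by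
  have hs := measurableSet_simplexD d
  have hg : IntegrableOn g (simplexD d) := Integrable.of_integral_ne_zero (by simp [hg1])
  have hh : IntegrableOn h (simplexD d) := Integrable.of_integral_ne_zero (by simp [hh1])
  have hpt : ∀ᵐ x ∂volume.restrict (simplexD d),
      0 < g x ∧ 0 < h x ∧ |log (g x / h x) - κ| ≤ M :=
    ae_restrict_of_forall_mem hs fun x hx => ⟨hgpos x hx, hhpos x hx, hM x hx⟩
  have hchi : IntegrableOn (fun x => (g x - h x) ^ 2 / g x) (simplexD d) :=
    integrable_sq_sub_div_of_le_mul hg hh.1 (K := exp (M - κ)) <|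
      hpt.mono fun x ⟨hgx, hhx, hMx⟩ => ⟨hgx, hhx.le, le_exp_mul_of_abs_log_div_sub_le hgx hhx hMx⟩
  have hlog : AEMeasurable (fun x => (log (g x / h x) - κ) ^ 2) (volume.restrict (simplexD d)) :=
    ((measurable_log.comp_aemeasurable (hg.1.aemeasurable.div hh.1.aemeasurable)).sub_const κ)
      |>.pow_const 2
  have hrhs : IntegrableOn (fun x => g x * (log (g x / h x) - κ) ^ 2) (simplexD d) :=
    hg.mul_bdd (c := M ^ 2) hlog.aestronglyMeasurable <| hpt.mono fun x ⟨_, _, hMx⟩ => by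
      rw [norm_pow, norm_eq_abs]; exact pow_le_pow_left₀ (abs_nonneg _) hMx 2
  calc ∫ x in simplexD d, (g x - h x) ^ 2 / g x
      ≤ ∫ x in simplexD d, (exp (-κ) * g x - h x) ^ 2 / g x := by
        rw [integral_sq_mul_sub_div_eq hg hh hg1 hh1 (hpt.mono fun x hx => hx.1.ne') hchi]
        exact le_add_of_nonneg_right (sq_nonneg _)
    _ ≤ ∫ x in simplexD d, exp (2 * (M - κ)) * (g x * (log (g x / h x) - κ) ^ 2) :=
        integral_mono_of_nonneg (hpt.mono fun x hx => div_nonneg (sq_nonneg _) hx.1.le)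
          (hrhs.const_mul _)
          (hpt.mono fun x ⟨hgx, hhx, hMx⟩ => sq_exp_neg_mul_sub_div_le hgx hhx hMx)
    _ = exp (2 * (M - κ)) * ∫ x in simplexD d, g x * (log (g x / h x) - κ) ^ 2 :=
        integral_const_mul _ _

/-- Lemma: chi-square type bound. -/
theorem statement3 (d : ℕ) (hd : 2 ≤ d) (g h : (Fin d → ℝ) → ℝ)
    (hgm : Measurable g) (hhm : Measurable h)
    (hgpos : ∀ x ∈ simplexD d, 0 < g x) (hhpos : ∀ x ∈ simplexD d, 0 < h x)
    (hg1 : ∫ x in simplexD d, g x = 1) (hh1 : ∫ x in simplexD d, h x = 1)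
    (B : ℝ) (hB : ∀ x ∈ simplexD d, |Real.log (g x / h x)| ≤ B)
    (κ M : ℝ) (hM : ∀ x ∈ simplexD d, |Real.log (g x / h x) - κ| ≤ M) :
    ∫ x in simplexD d, (g x - h x)^2 / g x
      ≤ Real.exp (2*(M - κ)) * ∫ x in simplexD d, g x * (Real.log (g x / h x) - κ)^2 :=
  statement3_general d g h hgpos hhpos hg1 hh1 κ M hM
end

section
/- The inverse of the matrix R_k is the symmetric tridiagonal matrix with diagonal entries D_i = ((k+d-1)(k+1) + 2(i-1)(d-i))/(k(k+d)) for 1 ≤ i ≤ d, and off-diagonal entries Q_i = -√(i(d-i)(k+i)(k+d-i))/(k(k+d)) for 1 ≤ i ≤ d-1. -/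
/-!
Index from `0` and put `w m = √((d-1-m)! (k+m)! / (m! (k+d-1-m)!))`. Then
`R i j = w (min i j) / w (max i j)`, so `R` is a Green (single-pair) matrix and its inverse is
tridiagonal. Column `j` of `R * T = 1` says that, above the diagonal, `1 / w` satisfies the
three-term recurrence of `T`, below it `w` does, and on the diagonal a Wronskian-type identity
holds. With `s n = √(n (d-n) (k+n) (k+d-n))` all three reduce to `s n * w (n-1) = n (d-n) * w n`,
`s n ^ 2 = n (d-n) (k+n) (k+d-n)` and polynomial identities for the diagonal numerator.
-/

open MeasureTheory Real

open scoped Nat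

section Tridiagonal

variable {d : ℕ} {a σ : ℕ → ℝ} {T : Matrix (Fin d) (Fin d) ℝ}

/-- At `j = 0` the term `f (j - 1)` is `f 0` (truncated subtraction); it is killed by `σ 0 = 0`. -/
theorem sum_mul_tridiagonal_apply (hdiag : ∀ i : Fin d, T i i = a i)
    (hsub : ∀ i j : Fin d, j.1 = i.1 + 1 → T i j = σ j ∧ T j i = σ j)
    (hzero : ∀ i j : Fin d, i.1 + 1 < j.1 → T i j = 0 ∧ T j i = 0)
    (hσ₀ : σ 0 = 0) (hσ : σ d = 0) (f : ℕ → ℝ) (j : Fin d) :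
    ∑ l : Fin d, f l * T l j = σ j * f (j - 1) + a j * f j + σ (j + 1) * f (j + 1) := by
  have hcol : ∀ l : Fin d, T l j = (if l.1 + 1 = j.1 then σ j else 0) +
      (if l.1 = j.1 then a j else 0) + (if l.1 = j.1 + 1 then σ (j + 1) else 0) := by
    intro l
    rcases lt_trichotomy (l.1 + 1) j.1 with h | h | h
    · rw [(hzero l j h).1, if_neg (by omega), if_neg (by omega), if_neg (by omega)]; simp
    · rw [(hsub l j h.symm).1, if_pos h, if_neg (by omega), if_neg (by omega)]; simp
    rcases lt_trichotomy l.1 (j.1 + 1) with h' | h' | h'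
    · rw [Fin.ext (by omega : l.1 = j.1), hdiag, if_neg (by omega), if_pos rfl,
        if_neg (by omega)]; simp
    · rw [(hsub j l h').2, h', if_neg (by omega), if_neg (by omega), if_pos rfl]; simp
    · rw [(hzero j l h').2, if_neg (by omega), if_neg (by omega), if_neg (by omega)]; simp
  simp only [hcol, mul_add, Finset.sum_add_distrib, mul_ite, mul_zero]
  rw [Fin.sum_univ_eq_sum_range (fun l => if l + 1 = j.1 then f l * σ j else 0),
    Fin.sum_univ_eq_sum_range (fun l => if l = j.1 then f l * a j else 0),
    Fin.sum_univ_eq_sum_range (fun l => if l = j.1 + 1 then f l * σ (j + 1) else 0),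
    Finset.sum_ite_eq', Finset.sum_ite_eq']
  obtain ⟨j, hj⟩ := j
  have hleft :
      (∑ l ∈ Finset.range d, if l + 1 = j then f l * σ j else 0) = σ j * f (j - 1) := by
    rcases j with _ | m
    · simp [hσ₀]
    · simp [Finset.sum_ite_eq', show m < d by omega, mul_comm]
  have hright : (if j + 1 ∈ Finset.range d then f (j + 1) * σ (j + 1) else 0)
      = σ (j + 1) * f (j + 1) := by
    split_ifs with h
    · ring
    · rw [show j + 1 = d by simp at h; omega, hσ, zero_mul]
  rw [hleft, hright, if_pos (Finset.mem_range.2 hj), mul_comm (f j)]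

theorem mul_tridiagonal_eq_one_of_green {R : Matrix (Fin d) (Fin d) ℝ} (p q : ℕ → ℝ)
    (hR : ∀ i j : Fin d, R i j = p (min i.1 j.1) * q (max i.1 j.1))
    (hdiag : ∀ i : Fin d, T i i = a i)
    (hsub : ∀ i j : Fin d, j.1 = i.1 + 1 → T i j = σ j ∧ T j i = σ j)
    (hzero : ∀ i j : Fin d, i.1 + 1 < j.1 → T i j = 0 ∧ T j i = 0)
    (hσ₀ : σ 0 = 0) (hσ : σ d = 0)
    (hp : ∀ j, j + 1 < d → σ j * p (j - 1) + a j * p j + σ (j + 1) * p (j + 1) = 0)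
    (hq : ∀ j, 0 < j → j < d → σ j * q (j - 1) + a j * q j + σ (j + 1) * q (j + 1) = 0)
    (hw : ∀ j < d,
      σ j * (p (j - 1) * q j) + a j * (p j * q j) + σ (j + 1) * (p j * q (j + 1)) = 1) :
    R * T = 1 := by
  ext i j
  rw [Matrix.mul_apply, Matrix.one_apply, Finset.sum_congr rfl fun l _ => by rw [hR i l],
    sum_mul_tridiagonal_apply hdiag hsub hzero hσ₀ hσ (fun l => p (min i.1 l) * q (max i.1 l))]
  rcases lt_trichotomy i.1 j.1 with h | h | h
  · rw [if_neg (Fin.ne_of_lt h), min_eq_left (by omega : i.1 ≤ j - 1), min_eq_left h.le,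
      min_eq_left (by omega : i.1 ≤ j + 1), max_eq_right (by omega : i.1 ≤ j - 1),
      max_eq_right h.le, max_eq_right (by omega : i.1 ≤ j + 1)]
    linear_combination p i * hq j (by omega) j.2
  · rw [if_pos (Fin.ext h), h, min_eq_right (Nat.sub_le _ _), min_self,
      min_eq_left (Nat.le_succ _), max_eq_left (Nat.sub_le _ _), max_self,
      max_eq_right (Nat.le_succ _)]
    exact hw j j.2
  · rw [if_neg (Fin.ne_of_gt h), min_eq_right (by omega : j - 1 ≤ i.1), min_eq_right h.le,
      min_eq_right (by omega : j.1 + 1 ≤ i.1), max_eq_left (by omega : j - 1 ≤ i.1),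
      max_eq_left h.le, max_eq_left (by omega : j.1 + 1 ≤ i.1)]
    linear_combination q i * hp j (by omega)

end Tridiagonal

namespace Rk

noncomputable def weight (d k m : ℕ) : ℝ :=
  √((((d - 1 - m)! * (k + m)! : ℕ) : ℝ) / ((m ! * (k + d - 1 - m)! : ℕ) : ℝ))

/-- `-offDiag d k n / (k * (k + d))` is the entry of the inverse at `(n - 1, n)`; it vanishes at
`n = 0` and `n = d`, so the first and last columns need no separate treatment. -/
noncomputable def offDiag (d k n : ℕ) : ℝ :=
  √((n * (d - n) * (k + n) * (k + d - n) : ℕ) : ℝ)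

def diagNumer (d k j : ℕ) : ℕ := (k + d - 1) * (k + 1) + 2 * j * (d - 1 - j)

variable (d k : ℕ)

theorem weight_pos (m : ℕ) : 0 < weight d k m := by
  unfold weight; positivity

theorem sqrt_factorial_ratio_eq (i j : ℕ) :
    √(((j ! * (d - 1 - i)! : ℕ) : ℝ) / ((i ! * (d - 1 - j)! : ℕ) : ℝ)) *
      √((((k + d - 1 - j)! * (k + i)! : ℕ) : ℝ) /
        (((k + d - 1 - i)! * (k + j)! : ℕ) : ℝ)) =
    weight d k i * (weight d k j)⁻¹ := by
  unfold weight
  rw [← Real.sqrt_inv, ← Real.sqrt_mul (by positivity), ← Real.sqrt_mul (by positivity)]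
  congr 1
  push_cast
  field_simp

theorem offDiag_mul_weight_pred (n : ℕ) :
    offDiag d k n * weight d k (n - 1) = ((n * (d - n) : ℕ) : ℝ) * weight d k n := by
  rcases Nat.eq_zero_or_pos n with rfl | hn
  · simp [offDiag]
  rcases le_or_gt d n with hd | hd
  · simp [offDiag, Nat.sub_eq_zero_of_le hd]
  obtain ⟨m, rfl⟩ : ∃ m, n = m + 1 := ⟨n - 1, by omega⟩
  obtain ⟨e, rfl⟩ : ∃ e, d = m + 2 + e := ⟨d - m - 2, by omega⟩
  unfold offDiag weight
  rw [show m + 2 + e - (m + 1) = e + 1 by omega, show m + 1 - 1 = m by omega,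
    show m + 2 + e - 1 - m = e + 1 by omega, show k + (m + 2 + e) - 1 - m = k + e + 1 by omega,
    show m + 2 + e - 1 - (m + 1) = e by omega, show k + (m + 2 + e) - 1 - (m + 1) = k + e by omega,
    show k + (m + 2 + e) - (m + 1) = k + e + 1 by omega, show k + (m + 1) = k + m + 1 by omega,
    ← Real.sqrt_mul (by positivity), ← Real.sqrt_sq (Nat.cast_nonneg ((m + 1) * (e + 1))),
    ← Real.sqrt_mul (by positivity)]
  congr 1
  simp only [Nat.factorial_succ]
  push_cast
  field_simp

theorem offDiag_sq (n : ℕ) :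
    offDiag d k n ^ 2 = ((n * (d - n) : ℕ) : ℝ) * ((k + n) * (k + d - n) : ℕ) := by
  rw [offDiag, Real.sq_sqrt (Nat.cast_nonneg _)]
  push_cast
  ring

theorem offDiag_mul_weight {n : ℕ} (hn : 0 < n) (hnd : n < d) :
    offDiag d k n * weight d k n = (((k + n) * (k + d - n) : ℕ) : ℝ) * weight d k (n - 1) := by
  have hα : ((n * (d - n) : ℕ) : ℝ) ≠ 0 := by
    have : 0 < n * (d - n) := Nat.mul_pos hn (by omega)
    positivity
  apply mul_left_cancel₀ hα
  linear_combination (-offDiag d k n) * offDiag_mul_weight_pred d k n +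
    weight d k (n - 1) * offDiag_sq d k n

theorem offDiag_weight_recurrence {j : ℕ} (hj : j + 1 < d) :
    offDiag d k j * weight d k (j - 1) + offDiag d k (j + 1) * weight d k (j + 1) =
      diagNumer d k j * weight d k j := by
  have hD : diagNumer d k j = j * (d - j) + (k + (j + 1)) * (k + d - (j + 1)) := by
    unfold diagNumer
    zify [(by omega : 1 ≤ d), (by omega : j ≤ d - 1), (by omega : j ≤ d),
      (by omega : 1 ≤ k + d), (by omega : j + 1 ≤ k + d)]
    ring
  have hα := offDiag_mul_weight_pred d k j
  have hβ := offDiag_mul_weight d k (n := j + 1) (by omega) hj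
  rw [Nat.add_sub_cancel] at hβ
  rw [hD]
  push_cast at hα hβ ⊢
  linear_combination hα + hβ

theorem offDiag_inv_weight_recurrence {j : ℕ} (hj₀ : 0 < j) (hj : j < d) :
    offDiag d k j * (weight d k (j - 1))⁻¹ + offDiag d k (j + 1) * (weight d k (j + 1))⁻¹ =
      diagNumer d k j * (weight d k j)⁻¹ := by
  have hD : diagNumer d k j = (k + j) * (k + d - j) + (j + 1) * (d - (j + 1)) := by
    unfold diagNumer
    zify [(by omega : 1 ≤ d), (by omega : j ≤ d - 1), (by omega : j + 1 ≤ d),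
      (by omega : 1 ≤ k + d), (by omega : j ≤ k + d)]
    ring
  have hβ := offDiag_mul_weight d k hj₀ hj
  have hα := offDiag_mul_weight_pred d k (j + 1)
  rw [Nat.add_sub_cancel] at hα
  have h₁ := (weight_pos d k (j - 1)).ne'
  have h₂ := (weight_pos d k j).ne'
  have h₃ := (weight_pos d k (j + 1)).ne'
  rw [hD]
  push_cast at hα hβ ⊢
  field_simp
  linear_combination weight d k (j + 1) * hβ + weight d k (j - 1) * hα

theorem offDiag_weight_wronskian {j : ℕ} (hj : j < d) :
    offDiag d k j * (weight d k (j - 1) * (weight d k j)⁻¹) +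
      offDiag d k (j + 1) * (weight d k j * (weight d k (j + 1))⁻¹) =
      diagNumer d k j - ((k * (k + d) : ℕ) : ℝ) := by
  have hD : diagNumer d k j = j * (d - j) + (j + 1) * (d - (j + 1)) + k * (k + d) := by
    unfold diagNumer
    zify [(by omega : 1 ≤ d), (by omega : j ≤ d - 1), (by omega : j ≤ d),
      (by omega : j + 1 ≤ d), (by omega : 1 ≤ k + d)]
    ring
  have hα := offDiag_mul_weight_pred d k j
  have hα' := offDiag_mul_weight_pred d k (j + 1)
  rw [Nat.add_sub_cancel] at hα'
  have h₂ := (weight_pos d k j).ne'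
  have h₃ := (weight_pos d k (j + 1)).ne'
  rw [hD]
  push_cast at hα hα' ⊢
  field_simp
  linear_combination weight d k (j + 1) * hα + weight d k j * hα'

end Rk

open Rk in
theorem statement9_general (d k : ℕ) (hk : 1 ≤ k)
    (R T : Matrix (Fin d) (Fin d) ℝ)
    (hRdiag : ∀ i : Fin d, R i i = 1)
    (hRoff : ∀ i j : Fin d, i < j →
      R i j = Real.sqrt (((j.1.factorial * (d-1-i.1).factorial : ℕ) : ℝ) /
                ((i.1.factorial * (d-1-j.1).factorial : ℕ) : ℝ)) *
              Real.sqrt ((((k+d-1-j.1).factorial * (k+i.1).factorial : ℕ) : ℝ) /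
                (((k+d-1-i.1).factorial * (k+j.1).factorial : ℕ) : ℝ)))
    (hRsymm : ∀ i j : Fin d, R i j = R j i)
    (hTdiag : ∀ i : Fin d,
      T i i = (((k+d-1)*(k+1) + 2*i.1*(d-1-i.1) : ℕ) : ℝ) / ((k*(k+d) : ℕ) : ℝ))
    (hTsub : ∀ i j : Fin d, j.1 = i.1 + 1 →
      T i j = -(Real.sqrt (((i.1+1)*(d-1-i.1)*(k+i.1+1)*(k+d-1-i.1) : ℕ) : ℝ))
                / ((k*(k+d) : ℕ) : ℝ) ∧ T j i = T i j)
    (hTzero : ∀ i j : Fin d, i.1 + 1 < j.1 → T i j = 0 ∧ T j i = 0) :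
    R * T = 1 ∧ T * R = 1 := by
  set c : ℝ := ((k * (k + d) : ℕ) : ℝ)
  have hc : c ≠ 0 := Nat.cast_ne_zero.2 (Nat.mul_pos hk (by omega)).ne'
  have hR : ∀ i j : Fin d,
      R i j = weight d k (min i.1 j.1) * (weight d k (max i.1 j.1))⁻¹ := by
    intro i j
    rcases lt_trichotomy i j with h | rfl | h
    · rw [hRoff i j h, min_eq_left (show i.1 ≤ j.1 from h.le),
        max_eq_right (show i.1 ≤ j.1 from h.le), sqrt_factorial_ratio_eq]
    · rw [hRdiag, min_self, max_self, mul_inv_cancel₀ (weight_pos d k _).ne']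
    · rw [hRsymm, hRoff j i h, min_eq_right (show j.1 ≤ i.1 from h.le),
        max_eq_left (show j.1 ≤ i.1 from h.le), sqrt_factorial_ratio_eq]
  have hsub : ∀ i j : Fin d, j.1 = i.1 + 1 →
      T i j = -offDiag d k j / c ∧ T j i = -offDiag d k j / c := by
    intro i j h
    have hs : offDiag d k j = √(((i.1+1)*(d-1-i.1)*(k+i.1+1)*(k+d-1-i.1) : ℕ) : ℝ) := by
      rw [offDiag, h, show d - (i.1 + 1) = d - 1 - i.1 by omega,
        show k + d - (i.1 + 1) = k + d - 1 - i.1 by omega, ← add_assoc]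
    rw [(hTsub i j h).2, (hTsub i j h).1, hs]
    exact ⟨rfl, rfl⟩
  have hRT : R * T = 1 := by
    refine mul_tridiagonal_eq_one_of_green (a := fun j => (diagNumer d k j : ℝ) / c)
      (σ := fun n => -offDiag d k n / c) (weight d k) (fun m => (weight d k m)⁻¹) hR hTdiag hsub
      hTzero (by simp [offDiag]) (by simp [offDiag]) ?_ ?_ ?_
    · intro j hj
      linear_combination (-1 / c) * offDiag_weight_recurrence d k hj
    · intro j hj₀ hj
      linear_combination (-1 / c) * offDiag_inv_weight_recurrence d k hj₀ hj
    · intro j hj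
      rw [mul_inv_cancel₀ (weight_pos d k j).ne']
      field_simp
      linear_combination -offDiag_weight_wronskian d k hj
  exact ⟨hRT, mul_eq_one_comm.mp hRT⟩

/-- The inverse of `R_k` is an explicit symmetric tridiagonal matrix. -/
theorem statement9 (d k : ℕ) (hd : 2 ≤ d) (hk : 1 ≤ k)
    (R T : Matrix (Fin d) (Fin d) ℝ)
    (hRdiag : ∀ i : Fin d, R i i = 1)
    (hRoff : ∀ i j : Fin d, i < j →
      R i j = Real.sqrt (((j.1.factorial * (d-1-i.1).factorial : ℕ) : ℝ) /
                ((i.1.factorial * (d-1-j.1).factorial : ℕ) : ℝ)) *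
              Real.sqrt ((((k+d-1-j.1).factorial * (k+i.1).factorial : ℕ) : ℝ) /
                (((k+d-1-i.1).factorial * (k+j.1).factorial : ℕ) : ℝ)))
    (hRsymm : ∀ i j : Fin d, R i j = R j i)
    (hTdiag : ∀ i : Fin d,
      T i i = (((k+d-1)*(k+1) + 2*i.1*(d-1-i.1) : ℕ) : ℝ) / ((k*(k+d) : ℕ) : ℝ))
    (hTsub : ∀ i j : Fin d, j.1 = i.1 + 1 →
      T i j = -(Real.sqrt (((i.1+1)*(d-1-i.1)*(k+i.1+1)*(k+d-1-i.1) : ℕ) : ℝ))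
                / ((k*(k+d) : ℕ) : ℝ) ∧ T j i = T i j)
    (hTzero : ∀ i j : Fin d, i.1 + 1 < j.1 → T i j = 0 ∧ T j i = 0) :
    R * T = 1 ∧ T * R = 1 :=
  statement9_general d k hk R T hRdiag hRoff hRsymm hTdiag hTsub hTzero
end

section
/- The vector v with components v_i = (-1)^{i-1} √( (d-1)!/(d-i)! · (k+d-1)!/(k+d-i)! · k!/(k+i-1)! · 1/(i-1)! ) is an eigenvector of R_k^{-1} with eigenvalue (k+d-1)/k, and (k+d-1)/k is the largest eigenvalue of R_k^{-1}. -/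
/-! Write `w = |v|`, indexed from 0. Its squares obey the recurrence
`(p+1)(k+p+1) w_{p+1}² = (d-1-p)(k+d-1-p) w_p²`, which turns row `p` of `|R_k⁻¹| w = λ w`
(with `λ = (k+d-1)/k`) into the polynomial identity
`p(k+p) + k(k+d) D_p + (d-1-p)(k+d-1-p) = (k+d-1)(k+d)`.
As the diagonal of `R_k⁻¹` is nonnegative and its off-diagonal entries are nonpositive,
`R_k⁻¹ = S |R_k⁻¹| S` with `S = diag((-1)^p)`, so `v = S w` is an eigenvector for `λ`.
For the bound, `w` is a positive left eigenvector of the symmetric matrix `|R_k⁻¹|`; pairing it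
with `|x|` for an eigenvector `R_k⁻¹ x = μ x` gives `|μ| Σ w|x| ≤ λ Σ w|x|`. -/

open MeasureTheory Real

open Matrix

theorem Fin.sum_ite_val_eq {M : Type*} [AddCommMonoid M] {d : ℕ} (m : ℕ) (c : M)
    (hc : d ≤ m → c = 0) : ∑ j : Fin d, (if j.1 = m then c else 0) = c := by
  by_cases hm : m < d
  · rw [Finset.sum_eq_single ⟨m, hm⟩ (fun j _ hj => if_neg fun h => hj (Fin.ext h))
      (by simp)]
    simp
  · simp [hc (not_lt.mp hm)]

theorem Fin.sum_tridiagonal {M : Type*} [AddCommMonoid M] {d : ℕ} (f : Fin d → M) (p : Fin d)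
    (lo hi : M) (hlo : ∀ j : Fin d, j.1 + 1 = p.1 → f j = lo) (hlo₀ : p.1 = 0 → lo = 0)
    (hhi : ∀ j : Fin d, j.1 = p.1 + 1 → f j = hi) (hhi₀ : p.1 + 1 = d → hi = 0)
    (hf : ∀ j : Fin d, j.1 + 1 < p.1 ∨ p.1 + 1 < j.1 → f j = 0) :
    ∑ j, f j = lo + f p + hi := by
  -- For `p = 0` the first summand also fires at `j = p` (as `0 - 1 = 0` in `ℕ`); then `lo = 0`.
  have hsplit : ∀ j, f j = (if j.1 = p.1 - 1 then lo else 0) + (if p = j then f p else 0)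
      + (if j.1 = p.1 + 1 then hi else 0) := by
    intro j
    rcases (by omega : j.1 + 1 = p.1 ∨ j = p ∨ j.1 = p.1 + 1 ∨ j.1 + 1 < p.1 ∨ p.1 + 1 < j.1)
      with h | rfl | h | h | h
    · simp [hlo j h, show j.1 = p.1 - 1 by omega, show p ≠ j from fun e => by omega]
    · by_cases hj : j.1 = 0
      · simp [hj, hlo₀]
      · simp [show j.1 ≠ j.1 - 1 by omega]
    · simp [hhi j h, h, show p.1 + 1 ≠ p.1 - 1 by omega, show p ≠ j from fun e => by omega]
    all_goals simp [hf j (by omega), show j.1 ≠ p.1 - 1 by omega, show j.1 ≠ p.1 + 1 by omega,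
      show p ≠ j from fun e => by omega]
  rw [Finset.sum_congr rfl fun j _ => hsplit j, Finset.sum_add_distrib, Finset.sum_add_distrib,
    Fin.sum_ite_val_eq _ _ (fun h => absurd h (by omega)), Finset.sum_ite_eq,
    Fin.sum_ite_val_eq _ _ (fun h => hhi₀ (by omega))]
  simp

theorem Matrix.mulVec_mul_eq_smul_of_eq_mul_abs {n : Type*} [Fintype n] (A : Matrix n n ℝ)
    (s w : n → ℝ) (c : ℝ) (hs : ∀ i, s i * s i = 1) (hA : ∀ i j, A i j = s i * s j * |A i j|)
    (hw : ∀ i, ∑ j, |A i j| * w j = c * w i) : A *ᵥ (s * w) = c • (s * w) := by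
  ext i
  calc (A *ᵥ (s * w)) i = ∑ j, s i * (|A i j| * w j) * (s j * s j) := by
        simp only [mulVec, dotProduct, Pi.mul_apply]
        refine Finset.sum_congr rfl fun j _ => ?_
        conv_lhs => rw [hA i j]
        ring
    _ = (c • (s * w)) i := by
        simp only [hs, mul_one, ← Finset.mul_sum, hw, Pi.smul_apply, Pi.mul_apply, smul_eq_mul]
        ring

theorem Matrix.abs_le_of_hasEigenvalue {n : Type*} [Fintype n] [DecidableEq n]
    (A : Matrix n n ℝ) (w : n → ℝ) (hw : ∀ i, 0 < w i) (c : ℝ)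
    (hc : ∀ i, ∑ j, w j * |A j i| ≤ c * w i) {μ : ℝ}
    (hμ : Module.End.HasEigenvalue (toLin' A) μ) : |μ| ≤ c := by
  obtain ⟨x, hx⟩ := hμ.exists_hasEigenvector
  have hAx : A *ᵥ x = μ • x := by simpa [toLin'_apply] using hx.apply_eq_smul
  set S := ∑ i, w i * |x i|
  have hS : 0 < S := by
    obtain ⟨i, hi⟩ := Function.ne_iff.mp hx.right
    exact Finset.sum_pos' (fun j _ => by have := hw j; positivity)
      ⟨i, Finset.mem_univ _, mul_pos (hw i) (abs_pos.mpr hi)⟩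
  refine le_of_mul_le_mul_right ?_ hS
  calc |μ| * S = ∑ j, w j * |(A *ᵥ x) j| := by
        simp only [S, hAx, Finset.mul_sum, Pi.smul_apply, smul_eq_mul, abs_mul]
        exact Finset.sum_congr rfl fun j _ => by ring
    _ ≤ ∑ j, w j * ∑ i, |A j i| * |x i| := by
        gcongr with j
        · exact (hw j).le
        · simpa only [mulVec, dotProduct, abs_mul] using
            Finset.abs_sum_le_sum_abs (fun i => A j i * x i) _
    _ = ∑ i, (∑ j, w j * |A j i|) * |x i| := by
        simp only [Finset.mul_sum, Finset.sum_mul]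
        rw [Finset.sum_comm]
        exact Finset.sum_congr rfl fun i _ => Finset.sum_congr rfl fun j _ => by ring
    _ ≤ ∑ i, c * w i * |x i| := by gcongr with i; exact hc i
    _ = c * S := by simp only [S, Finset.mul_sum, mul_assoc]

-- Indices are 0-based: `eigvecSq d k p` is `v_{p+1}²`, and row `i` of `rInv d k` is row `i + 1`
-- of the paper's `R_k⁻¹`, so `rInvDiag d k i = D_{i+1}` and `rInvOffDiag d k i = Q_{i+1}`.
noncomputable def eigvecSq (d k p : ℕ) : ℝ :=
  (((d-1).factorial : ℕ) : ℝ) / (((d-1-p).factorial : ℕ) : ℝ) *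
    ((((k+d-1).factorial : ℕ) : ℝ) / (((k+d-1-p).factorial : ℕ) : ℝ)) *
    (((k.factorial : ℕ) : ℝ) / (((k+p).factorial : ℕ) : ℝ)) *
    (1 / ((p.factorial : ℕ) : ℝ))

theorem eigvecSq_pos (d k p : ℕ) : 0 < eigvecSq d k p := by
  unfold eigvecSq
  positivity

theorem succ_mul_eigvecSq_succ {d : ℕ} (k : ℕ) {p : ℕ} (hp : p + 1 ≤ d - 1) :
    (((p+1)*(k+p+1) : ℕ) : ℝ) * eigvecSq d k (p+1)
      = (((d-1-p)*(k+d-1-p) : ℕ) : ℝ) * eigvecSq d k p := by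
  unfold eigvecSq
  rw [show d-1-p = (d-1-(p+1)) + 1 by omega, show k+d-1-p = (k+d-1-(p+1)) + 1 by omega,
    show k+(p+1) = (k+p) + 1 by omega]
  simp only [Nat.factorial_succ]
  push_cast
  field_simp

theorem sqrt_mul_sqrt_of_mul_eq {x y z m : ℝ} (hx : 0 ≤ x) (hm : 0 ≤ m) (h : x * y = m ^ 2 * z) :
    √x * √y = m * √z := by
  rw [← Real.sqrt_mul hx, h, Real.sqrt_mul (sq_nonneg m), Real.sqrt_sq hm]

theorem sqrt_mul_sqrt_eigvecSq_succ (d k p : ℕ) :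
    √(((p+1)*(d-1-p)*(k+p+1)*(k+d-1-p) : ℕ) : ℝ) * √(eigvecSq d k (p+1))
      = (((d-1-p)*(k+d-1-p) : ℕ) : ℝ) * √(eigvecSq d k p) := by
  by_cases hp : p + 1 ≤ d - 1
  · refine sqrt_mul_sqrt_of_mul_eq (by positivity) (by positivity) ?_
    rw [sq, mul_assoc _ _ (eigvecSq d k p), ← succ_mul_eigvecSq_succ k hp]
    push_cast
    ring
  · simp [show d - 1 - p = 0 by omega]

theorem sqrt_mul_sqrt_eigvecSq {d : ℕ} (k : ℕ) {p : ℕ} (hp : p + 1 ≤ d - 1) :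
    √(((p+1)*(d-1-p)*(k+p+1)*(k+d-1-p) : ℕ) : ℝ) * √(eigvecSq d k p)
      = (((p+1)*(k+p+1) : ℕ) : ℝ) * √(eigvecSq d k (p+1)) := by
  have hm : (0 : ℝ) < (((d-1-p)*(k+d-1-p) : ℕ) : ℝ) := by
    exact_mod_cast Nat.mul_pos (by omega) (by omega)
  refine sqrt_mul_sqrt_of_mul_eq (by positivity) (by positivity) (mul_left_cancel₀ hm.ne' ?_)
  calc _ = (((p+1)*(d-1-p)*(k+p+1)*(k+d-1-p) : ℕ) : ℝ)
        * ((((d-1-p)*(k+d-1-p) : ℕ) : ℝ) * eigvecSq d k p) := by ring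
    _ = _ := by rw [← succ_mul_eigvecSq_succ k hp]; push_cast; ring

theorem rInv_coeff_sum {d : ℕ} (k : ℕ) {p : ℕ} (hp : p < d) :
    p*(k+p) + ((k+d-1)*(k+1) + 2*p*(d-1-p)) + (d-1-p)*(k+d-1-p) = (k+d-1)*(k+d) := by
  obtain ⟨e, rfl⟩ : ∃ e, d = p + e + 1 := ⟨d - 1 - p, by omega⟩
  rw [show p + e + 1 - 1 - p = e by omega, show k + (p + e + 1) - 1 - p = k + e by omega,
    show k + (p + e + 1) - 1 = k + p + e by omega]
  ring

noncomputable def rInvDiag (d k i : ℕ) : ℝ :=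
  (((k+d-1)*(k+1) + 2*i*(d-1-i) : ℕ) : ℝ) / ((k*(k+d) : ℕ) : ℝ)

noncomputable def rInvOffDiag (d k i : ℕ) : ℝ :=
  -√(((i+1)*(d-1-i)*(k+i+1)*(k+d-1-i) : ℕ) : ℝ) / ((k*(k+d) : ℕ) : ℝ)

noncomputable def rInv (d k : ℕ) : Matrix (Fin d) (Fin d) ℝ :=
  Matrix.of fun i j =>
    if i = j then rInvDiag d k i
    else if j.1 = i.1 + 1 then rInvOffDiag d k i
    else if i.1 = j.1 + 1 then rInvOffDiag d k j
    else 0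

theorem abs_rInvOffDiag (d k i : ℕ) :
    |rInvOffDiag d k i| = √(((i+1)*(d-1-i)*(k+i+1)*(k+d-1-i) : ℕ) : ℝ) / ((k*(k+d) : ℕ) : ℝ) := by
  rw [rInvOffDiag, abs_div, abs_neg, abs_of_nonneg (Real.sqrt_nonneg _), Nat.abs_cast]

theorem rInv_apply_self {d : ℕ} (k : ℕ) (i : Fin d) : rInv d k i i = rInvDiag d k i := by
  simp [rInv]

theorem rInv_apply_of_val_eq_succ {d : ℕ} (k : ℕ) {i j : Fin d} (h : j.1 = i.1 + 1) :
    rInv d k i j = rInvOffDiag d k i := by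
  simp [rInv, h, show i ≠ j from fun e => by omega]

theorem rInv_apply_of_succ_lt {d : ℕ} (k : ℕ) {i j : Fin d} (h : i.1 + 1 < j.1 ∨ j.1 + 1 < i.1) :
    rInv d k i j = 0 := by
  simp [rInv, show i ≠ j from fun e => by omega, show j.1 ≠ i.1 + 1 by omega,
    show i.1 ≠ j.1 + 1 by omega]

theorem rInv_isSymm (d k : ℕ) : (rInv d k).IsSymm := by
  ext i j
  simp only [transpose_apply, rInv, of_apply]
  split_ifs <;> first | rfl | omega | (subst_vars; rfl)

theorem rInv_apply_of_succ_eq {d : ℕ} (k : ℕ) {i j : Fin d} (h : i.1 = j.1 + 1) :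
    rInv d k i j = rInvOffDiag d k j := by
  rw [(rInv_isSymm d k).apply, rInv_apply_of_val_eq_succ k h]

theorem rInv_eq_neg_one_pow_mul_abs {d : ℕ} (k : ℕ) (i j : Fin d) :
    rInv d k i j = (-1) ^ i.1 * (-1) ^ j.1 * |rInv d k i j| := by
  have hdiag : 0 ≤ rInvDiag d k i := by unfold rInvDiag; positivity
  have hoff : ∀ m, rInvOffDiag d k m ≤ 0 := fun m =>
    div_nonpos_of_nonpos_of_nonneg (neg_nonpos.mpr (Real.sqrt_nonneg _)) (Nat.cast_nonneg _)
  rcases (by omega : i = j ∨ j.1 = i.1 + 1 ∨ i.1 = j.1 + 1 ∨ i.1 + 1 < j.1 ∨ j.1 + 1 < i.1)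
    with rfl | h | h | h | h
  · rw [rInv_apply_self, abs_of_nonneg hdiag, ← pow_add, Even.neg_one_pow ⟨i.1, rfl⟩, one_mul]
  · rw [rInv_apply_of_val_eq_succ k h, abs_of_nonpos (hoff _), h, pow_succ]
    ring_nf
    simp
  · rw [rInv_apply_of_succ_eq k h, abs_of_nonpos (hoff _), h, pow_succ]
    ring_nf
    simp
  · simp [rInv_apply_of_succ_lt k (Or.inl h)]
  · simp [rInv_apply_of_succ_lt k (Or.inr h)]

theorem sum_abs_rInv_mul_sqrt_eigvecSq {d k : ℕ} (hk : 1 ≤ k) (p : Fin d) :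
    ∑ j, |rInv d k p j| * √(eigvecSq d k j) = ((k:ℝ)+d-1)/k * √(eigvecSq d k p) := by
  rw [Fin.sum_tridiagonal _ p ((p.1*(k+p.1) : ℕ) / ((k*(k+d) : ℕ) : ℝ) * √(eigvecSq d k p))
    (((d-1-p.1)*(k+d-1-p.1) : ℕ) / ((k*(k+d) : ℕ) : ℝ) * √(eigvecSq d k p))]
  · have hc : (0 : ℝ) < k := by exact_mod_cast hk
    rw [rInv_apply_self, abs_of_nonneg (by unfold rInvDiag; positivity), rInvDiag, ← add_mul,
      ← add_mul, ← add_div, ← add_div, ← Nat.cast_add, ← Nat.cast_add, rInv_coeff_sum k p.2]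
    congr 1
    push_cast [Nat.cast_sub (by omega : 1 ≤ k + d)]
    field_simp
  · intro j hj
    rw [rInv_apply_of_succ_eq k hj.symm, abs_rInvOffDiag, div_mul_eq_mul_div,
      sqrt_mul_sqrt_eigvecSq k (by omega), ← hj]
    push_cast
    ring
  · intro hp
    simp [hp]
  · intro j hj
    rw [rInv_apply_of_val_eq_succ k hj, abs_rInvOffDiag, div_mul_eq_mul_div, hj,
      sqrt_mul_sqrt_eigvecSq_succ]
    push_cast
    ring
  · intro hp
    simp [show d - 1 - p.1 = 0 by omega]
  · intro j hj
    simp [rInv_apply_of_succ_lt k hj.symm]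

/-- The vector `v` is an eigenvector of `R_k⁻¹` (the explicit tridiagonal matrix)
with eigenvalue `(k+d-1)/k`, which is the largest eigenvalue. -/
theorem statement10 (d k : ℕ) (hd : 2 ≤ d) (hk : 1 ≤ k)
    (T : Matrix (Fin d) (Fin d) ℝ)
    (hTdiag : ∀ i : Fin d,
      T i i = (((k+d-1)*(k+1) + 2*i.1*(d-1-i.1) : ℕ) : ℝ) / ((k*(k+d) : ℕ) : ℝ))
    (hTsub : ∀ i j : Fin d, j.1 = i.1 + 1 →
      T i j = -(Real.sqrt (((i.1+1)*(d-1-i.1)*(k+i.1+1)*(k+d-1-i.1) : ℕ) : ℝ))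
                / ((k*(k+d) : ℕ) : ℝ) ∧ T j i = T i j)
    (hTzero : ∀ i j : Fin d, i.1 + 1 < j.1 → T i j = 0 ∧ T j i = 0)
    (v : Fin d → ℝ)
    (hv : ∀ p : Fin d, v p = (-1)^p.1 *
      Real.sqrt ((((d-1).factorial : ℕ) : ℝ) / (((d-1-p.1).factorial : ℕ) : ℝ) *
        ((((k+d-1).factorial : ℕ) : ℝ) / (((k+d-1-p.1).factorial : ℕ) : ℝ)) *
        (((k.factorial : ℕ) : ℝ) / (((k+p.1).factorial : ℕ) : ℝ)) *
        (1 / ((p.1.factorial : ℕ) : ℝ)))) :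
    T.mulVec v = (((k:ℝ)+d-1)/k) • v ∧ v ≠ 0 ∧
    (∀ μ : ℝ, Module.End.HasEigenvalue (Matrix.toLin' T) μ → μ ≤ ((k:ℝ)+d-1)/k) := by
  have hT : T = rInv d k := by
    ext i j
    rcases (by omega : i = j ∨ j.1 = i.1 + 1 ∨ i.1 = j.1 + 1 ∨ i.1 + 1 < j.1 ∨ j.1 + 1 < i.1)
      with rfl | h | h | h | h
    · exact (hTdiag i).trans (rInv_apply_self k i).symm
    · exact (hTsub i j h).1.trans (rInv_apply_of_val_eq_succ k h).symm
    · exact ((hTsub j i h).2.trans (hTsub j i h).1).trans (rInv_apply_of_succ_eq k h).symm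
    · rw [(hTzero i j h).1, rInv_apply_of_succ_lt k (Or.inl h)]
    · rw [(hTzero j i h).2, rInv_apply_of_succ_lt k (Or.inr h)]
  have hv : v = (fun p : Fin d => (-1 : ℝ) ^ p.1) * fun p : Fin d => √(eigvecSq d k p) :=
    funext hv
  have hw : ∀ p : Fin d, 0 < √(eigvecSq d k p) := fun p => Real.sqrt_pos.mpr (eigvecSq_pos d k p)
  subst hT hv
  refine ⟨mulVec_mul_eq_smul_of_eq_mul_abs _ _ _ _ (fun i => pow_mul_pow_eq_one _ (by norm_num))
    (rInv_eq_neg_one_pow_mul_abs k) (sum_abs_rInv_mul_sqrt_eigvecSq hk), fun h => ?_,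
    fun μ hμ => (le_abs_self μ).trans (abs_le_of_hasEigenvalue _ _ hw _ (fun i => ?_) hμ)⟩
  · simpa using (hw ⟨0, by omega⟩).ne' (by simpa using congrFun h ⟨0, by omega⟩)
  · simp_rw [(rInv_isSymm d k).apply i, mul_comm (√(eigvecSq d k _)),
      sum_abs_rInv_mul_sqrt_eigvecSq hk i, le_refl]
end
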